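/- Let n, n_G, r_G, k_R, n_R, r_R, d_R be positive integers. Let H_R ∈ 𝔽₂^{r_R×n_R} have full row rank r_R, and suppose every nonzero y ∈ 𝔽₂^{n_R} with H_R yᵀ = 0 satisfies |y| ≥ d_R. Let G_R^r ∈ 𝔽₂^{n_R×k_R} be the matrix whose transpose is (E_{k_R} | 0). Let H_G ∈ 𝔽₂^{r_G×n_G} and S ∈ 𝔽₂^{n_G×n}. Define H̃_M = (E_{r_R}⊗H_G | H_R⊗E_{r_G}) ∈ 𝔽₂^{r_R r_G×(r_R n_G + n_R r_G)} and define H̃_G ∈ 𝔽₂^{(r_R n_G + n_R r_G)×n_R n_G} as the vertical stack of H_R⊗E_{n_G} on top of E_{n_R}⊗H_G. Then for every v ∈ 𝔽₂^{r_R n_G + n_R r_G} with H̃_M vᵀ = 0 and |v| < d_R, there exists u⋆ ∈ 𝔽₂^{n_R n_G} such that vᵀ = H̃_G u⋆ᵀ and, for every l ∈ {1, …, k_R}, |u⋆·((G_R^r)_{•,l} ⊗ S)| ≤ ‖S‖·|v|, where (G_R^r)_{•,l} denotes the l-th column of G_R^r. -/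

import Mathlib

open Matrix Kronecker

/-- The matrix norm induced by Hamming weight: the maximum of `|u A| / |u|`
over nonzero row vectors `u`. -/
noncomputable def matNorm {m n : ℕ} (A : Matrix (Fin m) (Fin n) (ZMod 2)) : ℝ :=
  ⨆ u : Fin m → ZMod 2,
    if u = 0 then 0 else (hammingNorm (Matrix.vecMul u A) : ℝ) / (hammingNorm u : ℝ)

private lemma mem_range_of_dual {a b : ℕ} (A : Matrix (Fin a) (Fin b) (ZMod 2))
    (y : Fin a → ZMod 2)
    (h : ∀ f : Fin a → ZMod 2, (∀ j, ∑ i, f i * A i j = 0) → ∑ i, y i * f i = 0) :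
    ∃ x : Fin b → ZMod 2, A.mulVec x = y := by
  have hy : y ∈ LinearMap.range A.mulVecLin := by
    rw [← Subspace.dualAnnihilator_dualCoannihilator_eq
      (W := LinearMap.range A.mulVecLin), Submodule.mem_dualCoannihilator]
    intro φ hφ
    rw [Submodule.mem_dualAnnihilator] at hφ
    have hφz : ∀ z : Fin a → ZMod 2,
        φ z = ∑ i, z i * φ (fun k => if i = k then 1 else 0) := by
      intro z
      conv_lhs => rw [pi_eq_sum_univ z]
      rw [map_sum]
      exact Finset.sum_congr rfl fun i _ => by rw [_root_.map_smul, smul_eq_mul]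
    have hker : ∀ j, ∑ i, φ (fun k => if i = k then 1 else 0) * A i j = 0 := by
      intro j
      have h0 : φ (A.mulVec fun k => if k = j then 1 else 0) = 0 :=
        hφ _ ⟨_, rfl⟩
      have hcol : ∀ i, A.mulVec (fun k => if k = j then 1 else 0) i = A i j := by
        intro i
        simp only [Matrix.mulVec, dotProduct, mul_ite, mul_one, mul_zero]
        rw [Finset.sum_ite_eq']
        simp
      calc ∑ i, φ (fun k => if i = k then 1 else 0) * A i j
          = ∑ i, (A.mulVec fun k => if k = j then 1 else 0) i
              * φ (fun k => if i = k then 1 else 0) := by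
            refine Finset.sum_congr rfl fun i _ => ?_
            rw [hcol i, mul_comm]
        _ = φ (A.mulVec fun k => if k = j then 1 else 0) := (hφz _).symm
        _ = 0 := h0
    have := h _ hker
    rw [hφz y]
    exact this
  obtain ⟨x, hx⟩ := hy
  exact ⟨x, by rw [← hx]; rfl⟩

private lemma exists_right_inv {r c : ℕ} (A : Matrix (Fin r) (Fin c) (ZMod 2))
    (h : A.rank = r) : ∃ P : Matrix (Fin c) (Fin r) (ZMod 2), A * P = 1 := by
  have htop : LinearMap.range A.mulVecLin = ⊤ := by
    apply Submodule.eq_top_of_finrank_eq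
    have h1 : A.rank = Module.finrank (ZMod 2) (LinearMap.range A.mulVecLin) := rfl
    rw [← h1, h, Module.finrank_fin_fun]
  have hs : Function.Surjective (A.mulVecLin) := LinearMap.range_eq_top.mp htop
  refine ⟨Matrix.of fun i a => Function.surjInv hs (Pi.single a 1) i, ?_⟩
  ext a a'
  rw [Matrix.mul_apply]
  have h1 : ∑ i, A a i * Function.surjInv hs (Pi.single a' 1) i
      = A.mulVecLin (Function.surjInv hs (Pi.single a' 1)) a := by
    simp [Matrix.mulVecLin_apply, Matrix.mulVec, dotProduct]
  simp only [Matrix.of_apply]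
  rw [h1, Function.surjInv_eq hs, Pi.single_apply, Matrix.one_apply]

private lemma kron_one_mulVec {p q s : ℕ} (A : Matrix (Fin p) (Fin q) (ZMod 2))
    (w : Fin q × Fin s → ZMod 2) (a : Fin p) (b : Fin s) :
    (A ⊗ₖ (1 : Matrix (Fin s) (Fin s) (ZMod 2))).mulVec w (a, b) = ∑ i, A a i * w (i, b) := by
  rw [Matrix.mulVec]
  simp only [dotProduct, Fintype.sum_prod_type, Matrix.kroneckerMap_apply,
    Matrix.one_apply, mul_ite, mul_one, mul_zero, ite_mul, zero_mul]
  refine Finset.sum_congr rfl fun i _ => ?_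
  rw [Finset.sum_ite_eq]
  simp

private lemma one_kron_mulVec {p q s : ℕ} (B : Matrix (Fin s) (Fin q) (ZMod 2))
    (w : Fin p × Fin q → ZMod 2) (a : Fin p) (b : Fin s) :
    ((1 : Matrix (Fin p) (Fin p) (ZMod 2)) ⊗ₖ B).mulVec w (a, b) = ∑ j, B b j * w (a, j) := by
  rw [Matrix.mulVec]
  simp only [dotProduct, Fintype.sum_prod_type, Matrix.kroneckerMap_apply,
    Matrix.one_apply, ite_mul, one_mul, zero_mul]
  rw [Finset.sum_comm]
  refine Finset.sum_congr rfl fun j _ => ?_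
  rw [Finset.sum_ite_eq]
  simp

private lemma matNorm_nonneg {m n : ℕ} (A : Matrix (Fin m) (Fin n) (ZMod 2)) :
    0 ≤ matNorm A := by
  have hb : BddAbove (Set.range fun u : Fin m → ZMod 2 =>
      if u = 0 then (0:ℝ) else (hammingNorm (Matrix.vecMul u A) : ℝ) / (hammingNorm u : ℝ)) :=
    Set.Finite.bddAbove (Set.finite_range _)
  have := le_ciSup hb (0 : Fin m → ZMod 2)
  simpa [matNorm] using this

private lemma hammingNorm_unit_prod {n : ℕ} (g : Fin n → ZMod 2) :
    hammingNorm (fun q : Unit × Fin n => g q.2) = hammingNorm g := by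
  show (Finset.univ.filter fun q : Unit × Fin n => g q.2 ≠ 0).card
      = (Finset.univ.filter fun c : Fin n => g c ≠ 0).card
  refine Finset.card_bij' (fun q _ => q.2) (fun c _ => ((), c)) ?_ ?_ ?_ ?_
  · intro q hq
    simpa only [Finset.mem_filter, Finset.mem_univ, true_and] using hq
  · intro c hc
    simpa only [Finset.mem_filter, Finset.mem_univ, true_and] using hc
  · intro q _
    obtain ⟨⟨⟩, c⟩ := q
    rfl
  · intro c _
    rfl

/-- Any error on the ancilla system undetectable by the checks `H̃_M` and of
weight below `d_R` is equivalent, via `H̃_G`, to a low-weight error on each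
target block. -/
theorem stmt2
    (n nG rG kR nR rR dR : ℕ)
    (hn : 0 < n) (hnG : 0 < nG) (hrG : 0 < rG) (hkR : 0 < kR)
    (hnR : 0 < nR) (hrR : 0 < rR) (hdR : 0 < dR) (hkRnR : kR ≤ nR)
    (HR : Matrix (Fin rR) (Fin nR) (ZMod 2))
    (hrank : HR.rank = rR)
    (hdist : ∀ y : Fin nR → ZMod 2, y ≠ 0 → HR.mulVec y = 0 → dR ≤ hammingNorm y)
    (GRr : Matrix (Fin nR) (Fin kR) (ZMod 2))
    (hGRr : ∀ (i : Fin nR) (j : Fin kR), GRr i j = if (i : ℕ) = (j : ℕ) then 1 else 0)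
    (HG : Matrix (Fin rG) (Fin nG) (ZMod 2))
    (S : Matrix (Fin nG) (Fin n) (ZMod 2)) :
    ∀ v : (Fin rR × Fin nG) ⊕ (Fin nR × Fin rG) → ZMod 2,
      (Matrix.fromCols ((1 : Matrix (Fin rR) (Fin rR) (ZMod 2)) ⊗ₖ HG)
        (HR ⊗ₖ (1 : Matrix (Fin rG) (Fin rG) (ZMod 2)))).mulVec v = 0 →
      hammingNorm v < dR →
      ∃ u : Fin nR × Fin nG → ZMod 2,
        (Matrix.fromRows (HR ⊗ₖ (1 : Matrix (Fin nG) (Fin nG) (ZMod 2)))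
          ((1 : Matrix (Fin nR) (Fin nR) (ZMod 2)) ⊗ₖ HG)).mulVec u = v ∧
        ∀ l : Fin kR,
          (hammingNorm (Matrix.vecMul u
            ((Matrix.of fun (i : Fin nR) (_ : Unit) => GRr i l) ⊗ₖ S)) : ℝ)
            ≤ matNorm S * (hammingNorm v : ℝ) := by
  intro v hv hw
  classical
  have addself : ∀ z : ZMod 2, z + z = 0 := by decide
  have char2 : ∀ x y : ZMod 2, x + y = 0 → y = x := by decide
  set V1 : Fin rR → Fin nG → ZMod 2 := fun a j => v (Sum.inl (a, j)) with hV1def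
  set V2 : Fin nR → Fin rG → ZMod 2 := fun i b => v (Sum.inr (i, b)) with hV2def
  have hvsplit : v = Sum.elim (fun q : Fin rR × Fin nG => V1 q.1 q.2)
      (fun q : Fin nR × Fin rG => V2 q.1 q.2) := by
    funext x
    cases x with
    | inl q => cases q; rfl
    | inr q => cases q; rfl
  have hcyc : ∀ (a : Fin rR) (b : Fin rG),
      ∑ i, HR a i * V2 i b = ∑ j, V1 a j * HG b j := by
    intro a b
    rw [hvsplit, Matrix.fromCols_mulVec_sumElim] at hv
    have h0 := congrFun hv (a, b)
    rw [Pi.add_apply, one_kron_mulVec, kron_one_mulVec] at h0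
    have h1 : ∑ j, HG b j * V1 a j + ∑ i, HR a i * V2 i b = 0 := h0
    have h2 := char2 _ _ h1
    rw [h2]
    exact Finset.sum_congr rfl fun j _ => mul_comm _ _
  -- the set of nonzero columns of V1
  set T1 : Finset (Fin nG) := Finset.univ.filter (fun j => ∃ a, V1 a j ≠ 0) with hT1def
  have hV1T : ∀ (j : Fin nG), j ∉ T1 → ∀ a, V1 a j = 0 := by
    intro j hj a
    by_contra hne
    exact hj (Finset.mem_filter.mpr ⟨Finset.mem_univ _, ⟨a, hne⟩⟩)
  set H' : Matrix (Fin rG) (Fin nG) (ZMod 2) :=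
    Matrix.of (fun b j => if j ∈ T1 then HG b j else 0) with hH'def
  have hH'mem : ∀ b j, j ∈ T1 → H' b j = HG b j := by
    intro b j hj; simp [hH'def, hj]
  have hH'nmem : ∀ b j, j ∉ T1 → H' b j = 0 := by
    intro b j hj; simp [hH'def, hj]
  obtain ⟨P, hP⟩ := exists_right_inv HR hrank
  have hPa : ∀ a a', ∑ i, HR a i * P i a' = if a = a' then 1 else 0 := by
    intro a a'
    rw [← Matrix.mul_apply, hP, Matrix.one_apply]
  set U0 : Fin nR → Fin nG → ZMod 2 := fun i j => ∑ a, P i a * V1 a j with hU0def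
  have hU0 : ∀ a j, ∑ i, HR a i * U0 i j = V1 a j := by
    intro a j
    have h1 : ∑ i, HR a i * U0 i j = ∑ a', (∑ i, HR a i * P i a') * V1 a' j := by
      simp only [hU0def, Finset.mul_sum, Finset.sum_mul]
      rw [Finset.sum_comm]
      exact Finset.sum_congr rfl fun i _ => Finset.sum_congr rfl fun a' _ => by ring
    rw [h1]
    simp only [hPa, ite_mul, one_mul, zero_mul]
    rw [Finset.sum_ite_eq]
    simp
  have hU0col : ∀ j, j ∉ T1 → ∀ i, U0 i j = 0 := by
    intro j hj i
    simp only [hU0def]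
    exact Finset.sum_eq_zero fun a _ => by rw [hV1T j hj a, mul_zero]
  set W : Fin nR → Fin rG → ZMod 2 := fun i b => V2 i b + ∑ j, U0 i j * H' b j with hWdef
  have hVHH' : ∀ a b, ∑ j, V1 a j * HG b j = ∑ j, V1 a j * H' b j := by
    intro a b
    refine Finset.sum_congr rfl fun j _ => ?_
    by_cases hj : j ∈ T1
    · rw [hH'mem b j hj]
    · rw [hV1T j hj a, zero_mul, zero_mul]
  have hWker : ∀ b a, ∑ i, HR a i * W i b = 0 := by
    intro b a
    have h1 : ∑ i, HR a i * W i b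
        = ∑ i, HR a i * V2 i b + ∑ j, (∑ i, HR a i * U0 i j) * H' b j := by
      simp only [hWdef, mul_add, Finset.sum_add_distrib, Finset.mul_sum]
      congr 1
      rw [Finset.sum_comm]
      refine Finset.sum_congr rfl fun j _ => ?_
      rw [Finset.sum_mul]
      exact Finset.sum_congr rfl fun i _ => by ring
    rw [h1]
    simp only [hU0]
    rw [hcyc a b, hVHH' a b]
    exact addself _
  -- nonzero rows of V2
  set RowS : Finset (Fin nR) := Finset.univ.filter (fun i => ∃ b, V2 i b ≠ 0) with hRowSdef
  have hV2R : ∀ i, i ∉ RowS → ∀ b, V2 i b = 0 := by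
    intro i hi b
    by_contra hne
    exact hi (Finset.mem_filter.mpr ⟨Finset.mem_univ _, ⟨b, hne⟩⟩)
  have hRowScard : RowS.card ≤ hammingNorm v := by
    have hnv : hammingNorm v
        = (Finset.univ.filter fun q : (Fin rR × Fin nG) ⊕ (Fin nR × Fin rG) => v q ≠ 0).card :=
      rfl
    rw [hnv]
    refine Finset.card_le_card_of_injOn
      (fun i => Sum.inr (i, if h : ∃ b, V2 i b ≠ 0 then h.choose else ⟨0, hrG⟩)) ?_ ?_
    · intro i hi
      replace hi : ∃ b, V2 i b ≠ 0 := (Finset.mem_filter.mp (Finset.mem_coe.mp hi)).2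
      simp only [Finset.mem_filter, Finset.mem_univ, true_and, dif_pos hi]
      exact Finset.mem_coe.mpr (Finset.mem_filter.mpr ⟨Finset.mem_univ _, hi.choose_spec⟩)
    · intro i _ i' _ hii
      simp only [Sum.inr.injEq, Prod.mk.injEq] at hii
      exact hii.1
  have hT1card : T1.card ≤ hammingNorm v := by
    have hnv : hammingNorm v
        = (Finset.univ.filter fun q : (Fin rR × Fin nG) ⊕ (Fin nR × Fin rG) => v q ≠ 0).card :=
      rfl
    rw [hnv]
    refine Finset.card_le_card_of_injOn
      (fun j => Sum.inl ((if h : ∃ a, V1 a j ≠ 0 then h.choose else ⟨0, hrR⟩), j)) ?_ ?_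
    · intro j hj
      replace hj : ∃ a, V1 a j ≠ 0 := (Finset.mem_filter.mp (Finset.mem_coe.mp hj)).2
      simp only [Finset.mem_filter, Finset.mem_univ, true_and, dif_pos hj]
      exact Finset.mem_coe.mpr (Finset.mem_filter.mpr ⟨Finset.mem_univ _, hj.choose_spec⟩)
    · intro j _ j' _ hjj
      simp only [Sum.inl.injEq, Prod.mk.injEq] at hjj
      exact hjj.2
  have hWf : ∀ f : Fin rG → ZMod 2, (∀ j, ∑ b, f b * H' b j = 0) →
      ∀ i, ∑ b, W i b * f b = 0 := by
    intro f hf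
    set g : Fin nR → ZMod 2 := fun i => ∑ b, V2 i b * f b with hgdef
    have hWg : ∀ i, ∑ b, W i b * f b = g i := by
      intro i
      simp only [hWdef, hgdef, add_mul, Finset.sum_add_distrib]
      have h2 : ∑ b, (∑ j, U0 i j * H' b j) * f b
          = ∑ j, U0 i j * (∑ b, f b * H' b j) := by
        simp only [Finset.sum_mul, Finset.mul_sum]
        rw [Finset.sum_comm]
        exact Finset.sum_congr rfl fun j _ => Finset.sum_congr rfl fun b _ => by ring
      rw [h2]
      simp only [hf, mul_zero, Finset.sum_const_zero, add_zero]
    have hgker : HR.mulVec g = 0 := by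
      funext a
      have h3 : ∑ i, HR a i * g i = ∑ b, (∑ i, HR a i * V2 i b) * f b := by
        simp only [hgdef, Finset.mul_sum, Finset.sum_mul]
        rw [Finset.sum_comm]
        exact Finset.sum_congr rfl fun i _ => Finset.sum_congr rfl fun b _ => by ring
      have h4 : ∑ i, HR a i * g i = ∑ j, V1 a j * (∑ b, HG b j * f b) := by
        rw [h3]
        simp only [hcyc a]
        simp only [Finset.sum_mul, Finset.mul_sum]
        rw [Finset.sum_comm]
        exact Finset.sum_congr rfl fun j _ => Finset.sum_congr rfl fun b _ => by ring
      have h5 : ∑ i, HR a i * g i = 0 := by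
        rw [h4]
        refine Finset.sum_eq_zero fun j _ => ?_
        by_cases hj : j ∈ T1
        · have h6 : ∑ b, HG b j * f b = ∑ b, f b * H' b j := by
            refine Finset.sum_congr rfl fun b _ => ?_
            rw [hH'mem b j hj, mul_comm]
          rw [h6, hf j, mul_zero]
        · rw [hV1T j hj a, zero_mul]
      exact h5
    have hgsupp : hammingNorm g ≤ RowS.card := by
      have hng : hammingNorm g = (Finset.univ.filter fun i => g i ≠ 0).card := rfl
      rw [hng]
      apply Finset.card_le_card
      intro i hi
      simp only [Finset.mem_filter, Finset.mem_univ, true_and] at hi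
      by_contra hc
      apply hi
      simp only [hgdef]
      exact Finset.sum_eq_zero fun b _ => by rw [hV2R i hc b, zero_mul]
    have hg0 : g = 0 := by
      by_contra hne
      exact absurd (hdist g hne hgker)
        (not_le.mpr (lt_of_le_of_lt (le_trans hgsupp hRowScard) hw))
    intro i
    rw [hWg i, hg0]
    rfl
  -- kernel basis
  set Ker : Submodule (ZMod 2) (Fin nR → ZMod 2) := LinearMap.ker HR.mulVecLin with hKerdef
  set bK : Module.Basis (Fin (Module.finrank (ZMod 2) Ker)) (ZMod 2) Ker :=
    Module.finBasis (ZMod 2) Ker with hbKdef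
  have hWmem : ∀ b, (fun i => W i b) ∈ Ker := by
    intro b
    rw [hKerdef, LinearMap.mem_ker]
    funext a
    exact hWker b a
  set Y : Fin (Module.finrank (ZMod 2) Ker) → Fin rG → ZMod 2 :=
    fun t b => bK.repr ⟨fun i => W i b, hWmem b⟩ t with hYdef
  have hYcol : ∀ b i, W i b
      = ∑ t, Y t b * ((bK t : Fin nR → ZMod 2) i) := by
    intro b i
    simp only [hYdef]
    conv_lhs => rw [show W i b = ((⟨fun i' => W i' b, hWmem b⟩ : Ker) : Fin nR → ZMod 2) i
      from rfl, ← bK.sum_repr ⟨fun i' => W i' b, hWmem b⟩]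
    simp [AddSubmonoidClass.coe_finset_sum, Finset.sum_apply, SetLike.val_smul,
      Pi.smul_apply, smul_eq_mul, -Module.Basis.sum_repr]
  have hYf : ∀ f : Fin rG → ZMod 2, (∀ j, ∑ b, f b * H' b j = 0) →
      ∀ t, ∑ b, Y t b * f b = 0 := by
    intro f hf t
    have hz : (∑ b, f b • (⟨fun i => W i b, hWmem b⟩ : Ker)) = (0 : Ker) := by
      apply Subtype.ext
      rw [Submodule.coe_sum]
      funext i
      rw [Finset.sum_apply]
      have hterm : ∀ b,
          ((f b • (⟨fun i' => W i' b, hWmem b⟩ : Ker) : Ker) : Fin nR → ZMod 2) i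
            = W i b * f b := by
        intro b
        rw [SetLike.val_smul, Pi.smul_apply, smul_eq_mul, mul_comm]
      rw [Finset.sum_congr rfl fun b _ => hterm b, hWf f hf i]
      rfl
    have h4 : ∑ b, f b * Y t b = 0 := by
      have h5 : bK.repr (∑ b, f b • (⟨fun i => W i b, hWmem b⟩ : Ker)) t = 0 := by
        rw [hz]
        simp
      rw [map_sum, Finsupp.finset_sum_apply] at h5
      rw [← h5]
      refine Finset.sum_congr rfl fun b _ => ?_
      rw [_root_.map_smul, Finsupp.smul_apply, smul_eq_mul]
    rw [show ∑ b, Y t b * f b = ∑ b, f b * Y t b from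
      Finset.sum_congr rfl fun b _ => mul_comm _ _]
    exact h4
  have hxex : ∀ t, ∃ x : Fin nG → ZMod 2, H'.mulVec x = fun b => Y t b := by
    intro t
    exact mem_range_of_dual H' (fun b => Y t b) (fun f hf => hYf f hf t)
  choose x hx using hxex
  set x' : Fin (Module.finrank (ZMod 2) Ker) → Fin nG → ZMod 2 :=
    fun t j => if j ∈ T1 then x t j else 0 with hx'def
  have hx' : ∀ t b, ∑ j, H' b j * x' t j = Y t b := by
    intro t b
    have h6 : ∑ j, H' b j * x' t j = ∑ j, H' b j * x t j := by
      refine Finset.sum_congr rfl fun j _ => ?_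
      by_cases hj : j ∈ T1
      · simp [hx'def, hj]
      · rw [hH'nmem b j hj, zero_mul, zero_mul]
    rw [h6]
    exact congrFun (hx t) b
  set K : Fin nR → Fin nG → ZMod 2 :=
    fun i j => ∑ t, (bK t : Fin nR → ZMod 2) i * x' t j with hKdef
  have hbker : ∀ t a, ∑ i, HR a i * (bK t : Fin nR → ZMod 2) i = 0 := by
    intro t a
    have h7 : HR.mulVecLin ((bK t : Fin nR → ZMod 2)) = 0 := LinearMap.mem_ker.mp (bK t).2
    exact congrFun h7 a
  have hKker : ∀ a j, ∑ i, HR a i * K i j = 0 := by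
    intro a j
    have h8 : ∑ i, HR a i * K i j
        = ∑ t, (∑ i, HR a i * (bK t : Fin nR → ZMod 2) i) * x' t j := by
      simp only [hKdef, Finset.mul_sum]
      rw [Finset.sum_comm]
      refine Finset.sum_congr rfl fun t _ => ?_
      rw [Finset.sum_mul]
      exact Finset.sum_congr rfl fun i _ => by ring
    rw [h8]
    simp only [hbker, zero_mul, Finset.sum_const_zero]
  have hKW : ∀ i b, ∑ j, K i j * H' b j = W i b := by
    intro i b
    have h9 : ∑ j, K i j * H' b j
        = ∑ t, (bK t : Fin nR → ZMod 2) i * (∑ j, H' b j * x' t j) := by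
      simp only [hKdef, Finset.sum_mul, Finset.mul_sum]
      rw [Finset.sum_comm]
      exact Finset.sum_congr rfl fun t _ => Finset.sum_congr rfl fun j _ => by ring
    rw [h9]
    simp only [hx']
    rw [hYcol b i]
    exact Finset.sum_congr rfl fun t _ => mul_comm _ _
  have hKcol : ∀ j, j ∉ T1 → ∀ i, K i j = 0 := by
    intro j hj i
    simp only [hKdef, hx'def, if_neg hj, mul_zero, Finset.sum_const_zero]
  -- the solution U
  set U : Fin nR → Fin nG → ZMod 2 := fun i j => U0 i j + K i j with hUdef
  have hU1 : ∀ a j, ∑ i, HR a i * U i j = V1 a j := by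
    intro a j
    simp only [hUdef, mul_add, Finset.sum_add_distrib]
    rw [hU0 a j, hKker a j, add_zero]
  have hUcol : ∀ j, j ∉ T1 → ∀ i, U i j = 0 := by
    intro j hj i
    simp only [hUdef]
    rw [hU0col j hj i, hKcol j hj i, add_zero]
  have hUH' : ∀ i b, ∑ j, U i j * H' b j = V2 i b := by
    intro i b
    simp only [hUdef, add_mul, Finset.sum_add_distrib]
    rw [hKW i b]
    simp only [hWdef]
    rw [add_comm (V2 i b), ← add_assoc, addself, zero_add]
  have hUHG : ∀ i b, ∑ j, U i j * HG b j = V2 i b := by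
    intro i b
    rw [← hUH' i b]
    refine Finset.sum_congr rfl fun j _ => ?_
    by_cases hj : j ∈ T1
    · rw [hH'mem b j hj]
    · rw [hUcol j hj i, zero_mul, zero_mul]
  refine ⟨fun q => U q.1 q.2, ?_, ?_⟩
  · rw [Matrix.fromRows_mulVec]
    funext q
    cases q with
    | inl q =>
      obtain ⟨a, j⟩ := q
      rw [Sum.elim_inl, kron_one_mulVec]
      exact hU1 a j
    | inr q =>
      obtain ⟨i, b⟩ := q
      rw [Sum.elim_inr, one_kron_mulVec]
      rw [show (∑ j, HG b j * (fun q : Fin nR × Fin nG => U q.1 q.2) (i, j))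
          = ∑ j, U i j * HG b j from Finset.sum_congr rfl fun j _ => mul_comm _ _]
      exact hUHG i b
  · intro l
    have hlnR : (l : ℕ) < nR := lt_of_lt_of_le l.2 hkRnR
    set i₀ : Fin nR := ⟨(l : ℕ), hlnR⟩ with hi0def
    set row : Fin nG → ZMod 2 := fun j => U i₀ j with hrowdef
    have hcond : ∀ i : Fin nR, ((i : ℕ) = (l : ℕ)) = (i = i₀) := by
      intro i
      refine propext ⟨fun h => Fin.ext h, fun h => by rw [h]⟩
    have hvecmul : Matrix.vecMul (fun q : Fin nR × Fin nG => U q.1 q.2)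
        ((Matrix.of fun (i : Fin nR) (_ : Unit) => GRr i l) ⊗ₖ S)
        = fun q : Unit × Fin n => Matrix.vecMul row S q.2 := by
      funext q
      obtain ⟨u1, c⟩ := q
      show ∑ p : Fin nR × Fin nG, U p.1 p.2
          * ((Matrix.of fun (i : Fin nR) (_ : Unit) => GRr i l) ⊗ₖ S) p (u1, c)
          = ∑ j, row j * S j c
      simp only [Matrix.kroneckerMap_apply, Matrix.of_apply, hGRr, Fintype.sum_prod_type,
        ite_mul, one_mul, zero_mul, mul_ite, mul_zero, hcond]
      simp only [Finset.sum_ite_irrel, Finset.sum_const_zero]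
      rw [Finset.sum_ite_eq']
      simp only [Finset.mem_univ, if_true]
      rfl
    rw [hvecmul, hammingNorm_unit_prod]
    have hrowsub : hammingNorm row ≤ T1.card := by
      have hnr : hammingNorm row = (Finset.univ.filter fun j => row j ≠ 0).card := rfl
      rw [hnr]
      apply Finset.card_le_card
      intro j hj
      simp only [Finset.mem_filter, Finset.mem_univ, true_and] at hj
      by_contra hjn
      exact hj (hUcol j hjn i₀)
    have hrowle : hammingNorm row ≤ hammingNorm v := le_trans hrowsub hT1card
    by_cases h0 : row = 0
    · rw [h0, Matrix.zero_vecMul]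
      simp only [hammingNorm_zero, Nat.cast_zero]
      exact mul_nonneg (matNorm_nonneg S) (Nat.cast_nonneg _)
    · have hb : BddAbove (Set.range fun u : Fin nG → ZMod 2 =>
          if u = 0 then (0:ℝ)
          else (hammingNorm (Matrix.vecMul u S) : ℝ) / (hammingNorm u : ℝ)) :=
        Set.Finite.bddAbove (Set.finite_range _)
      have h1 : (if row = 0 then (0:ℝ)
          else (hammingNorm (Matrix.vecMul row S) : ℝ) / (hammingNorm row : ℝ))
          ≤ matNorm S := le_ciSup hb row
      rw [if_neg h0] at h1
      have hpos : (0:ℝ) < (hammingNorm row : ℝ) := by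
        exact_mod_cast hammingNorm_pos_iff.mpr h0
      have h2 : (hammingNorm (Matrix.vecMul row S) : ℝ)
          ≤ matNorm S * (hammingNorm row : ℝ) := (div_le_iff₀ hpos).mp h1
      refine h2.trans ?_
      apply mul_le_mul_of_nonneg_left _ (matNorm_nonneg S)
      exact_mod_cast hrowle
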